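/- Let n ≥ 1, 0 < q ≤ 1 and q ≤ λ < ∞, and let φ ∈ C_c^∞(ℝⁿ) be nonnegative with support contained in B(0,1) and ∫φ = 1. There is a constant C > 0 depending only on n, q, λ, φ such that: for every axis-parallel cube Q ⊆ ℝⁿ of sidelength ℓ_Q ≥ 1 and every measurable a : ℝⁿ → ℂ supported in Q with ‖a‖_{L^∞} ≤ |Q|^{−1/λ}, one has ‖m_φ a‖_{M_q^λ} ≤ C. -/

import Mathlib

open MeasureTheory
open scoped ENNReal NNReal BigOperators

noncomputable section

abbrev Euc (n : ℕ) := EuclideanSpace ℝ (Fin n)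

/-- Closed axis-parallel cube with lower corner `c` and sidelength `ℓ`. -/
def cube {n : ℕ} (c : Euc n) (ℓ : ℝ) : Set (Euc n) :=
  {y : Euc n | ∀ i, c i ≤ y i ∧ y i ≤ c i + ℓ}

/-- The cube with the same center as `cube c ℓ` and twice its sidelength. -/
def cube2 {n : ℕ} (c : Euc n) (ℓ : ℝ) : Set (Euc n) :=
  cube (WithLp.toLp 2 (fun i => c i - ℓ / 2) : Euc n) (2 * ℓ)

/-- Morrey "norm" (in `ℝ≥0∞`) of a nonnegative-valued function `u`. -/
def morrey (n : ℕ) (q lam : ℝ) (u : Euc n → ℝ≥0∞) : ℝ≥0∞ :=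
  ⨆ (c : Euc n) (ℓ : ℝ) (_ : 0 < ℓ),
    volume (cube c ℓ) ^ (1 / lam - 1 / q) *
      (∫⁻ y in cube c ℓ, (u y) ^ q) ^ (1 / q)

/-- Dilation `φ_t(x) = t^{-n} φ(x/t)`. -/
def dilat (n : ℕ) (φ : Euc n → ℂ) (t : ℝ) (x : Euc n) : ℂ :=
  (((t ^ n)⁻¹ : ℝ) : ℂ) * φ (t⁻¹ • x)

/-- Convolution `(φ_t ∗ f)(x)`. -/
def conv (n : ℕ) (φ f : Euc n → ℂ) (t : ℝ) (x : Euc n) : ℂ :=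
  ∫ y, dilat n φ t (x - y) * f y

/-- Nontangential maximal function `M*_φ f`. -/
def ntMax (n : ℕ) (φ f : Euc n → ℂ) (x : Euc n) : ℝ≥0∞ :=
  ⨆ (t : ℝ) (_ : 0 < t) (y : Euc n) (_ : dist x y < t), (‖conv n φ f t y‖₊ : ℝ≥0∞)

/-- Smooth (radial) maximal function `M_φ f`. -/
def smMax (n : ℕ) (φ f : Euc n → ℂ) (x : Euc n) : ℝ≥0∞ :=
  ⨆ (t : ℝ) (_ : 0 < t), (‖conv n φ f t x‖₊ : ℝ≥0∞)

/-- Truncated maximal function `m_φ f`. -/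
def trMax (n : ℕ) (φ f : Euc n → ℂ) (x : Euc n) : ℝ≥0∞ :=
  ⨆ (t : ℝ) (_ : 0 < t ∧ t ≤ 1), (‖conv n φ f t x‖₊ : ℝ≥0∞)

/-- Fourier transform `f̂(ξ) = ∫ e^{-i x·ξ} f(x) dx`. -/
def ft (n : ℕ) (f : Euc n → ℂ) (ξ : Euc n) : ℂ :=
  ∫ x, Complex.exp (-(Complex.I * ((inner ℝ x ξ : ℝ) : ℂ))) * f x

/-- A dyadic cube `2^k (m + [0,1)^n)`, recorded by its data. -/
structure DyadicCube (n : ℕ) where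
  k : ℤ
  m : Fin n → ℤ

/-- The underlying set of a dyadic cube. -/
def DyadicCube.set {n : ℕ} (D : DyadicCube n) : Set (Euc n) :=
  {y : Euc n | ∀ i, (2 : ℝ) ^ D.k * (D.m i : ℝ) ≤ y i ∧ y i < (2 : ℝ) ^ D.k * ((D.m i : ℝ) + 1)}

/-- Sidelength of a dyadic cube. -/
def DyadicCube.len {n : ℕ} (D : DyadicCube n) : ℝ := (2 : ℝ) ^ D.k

/-- The cube with the same center as the dyadic cube `D` and twice its sidelength. -/
def DyadicCube.double {n : ℕ} (D : DyadicCube n) : Set (Euc n) :=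
  cube (WithLp.toLp 2 (fun i => (2 : ℝ) ^ D.k * (D.m i : ℝ) - (2 : ℝ) ^ D.k / 2) : Euc n) (2 * (2 : ℝ) ^ D.k)

/-- The norm `‖{s_Q}‖_{λ,q}` of a family of scalars indexed by dyadic cubes. -/
def sNorm (n : ℕ) (q lam : ℝ) (s : DyadicCube n → ℂ) : ℝ≥0∞ :=
  ⨆ J : DyadicCube n,
    (volume J.set ^ (q / lam - 1) *
      ∑' Q : {Q : DyadicCube n // Q.set ⊆ J.set},
        (volume (Q.1).set ^ (1 / q - 1 / lam) * (‖s Q.1‖₊ : ℝ≥0∞)) ^ q) ^ (1 / q)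

/-- `(q,λ,∞)`-atom supported in the set `Q` (with given volume normalization). -/
def IsAtomOn (n : ℕ) (q lam : ℝ) (Q : Set (Euc n)) (a : Euc n → ℂ) : Prop :=
  Measurable a ∧ Function.support a ⊆ Q ∧
    (∀ x, (‖a x‖₊ : ℝ≥0∞) ≤ volume Q ^ (-(1 / lam))) ∧
    ∀ α : Fin n → ℕ, ((∑ i, α i : ℕ) : ℤ) ≤ ⌊(n : ℝ) * (1 / q - 1)⌋ →
      ∫ x, (∏ i, ((x i : ℝ) : ℂ) ^ α i) * a x = 0


lemma cube_eq {n : ℕ} (c : Euc n) (ℓ : ℝ) :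
    cube c ℓ = (MeasurableEquiv.toLp 2 (Fin n → ℝ)).symm ⁻¹' Set.univ.pi
      (fun i => Set.Icc (c i) (c i + ℓ)) := by
  ext y
  simp only [Set.mem_preimage, Set.mem_univ_pi, Set.mem_Icc, cube, Set.mem_setOf_eq]
  exact Iff.rfl

lemma measurableSet_cube {n : ℕ} (c : Euc n) (ℓ : ℝ) : MeasurableSet (cube c ℓ) := by
  rw [cube_eq]
  exact (MeasurableEquiv.toLp 2 (Fin n → ℝ)).symm.measurable
    (MeasurableSet.univ_pi fun i => measurableSet_Icc)

lemma volume_cube {n : ℕ} (c : Euc n) {ℓ : ℝ} (hℓ : 0 ≤ ℓ) :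
    volume (cube c ℓ) = ENNReal.ofReal (ℓ ^ n) := by
  rw [cube_eq]
  rw [(EuclideanSpace.volume_preserving_symm_measurableEquiv_toLp (Fin n)).measure_preimage
    ((MeasurableSet.univ_pi fun i => measurableSet_Icc).nullMeasurableSet)]
  rw [volume_pi_pi]
  simp [Real.volume_Icc, ENNReal.ofReal_pow hℓ]

lemma abs_coord_le_norm {n : ℕ} (x : Euc n) (i : Fin n) : |x i| ≤ ‖x‖ := by
  rw [EuclideanSpace.norm_eq]
  rw [← Real.sqrt_sq_eq_abs]
  apply Real.sqrt_le_sqrt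
  have : ∀ j, (0:ℝ) ≤ ‖x j‖ ^ 2 := fun j => sq_nonneg _
  calc (x i) ^ 2 = ‖x i‖ ^ 2 := by rw [Real.norm_eq_abs, sq_abs]
    _ ≤ ∑ j, ‖x j‖ ^ 2 := Finset.single_le_sum (fun j _ => this j) (Finset.mem_univ i)


theorem stmt16 (n : ℕ) (hn : 1 ≤ n) (q lam : ℝ) (hq : 0 < q) (hq1 : q ≤ 1) (hqlam : q ≤ lam)
    (φ : Euc n → ℝ) (hφ : ContDiff ℝ (⊤ : ℕ∞) φ) (hφc : HasCompactSupport φ)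
    (hφ0 : ∀ x, 0 ≤ φ x) (hφs : tsupport φ ⊆ Metric.ball (0 : Euc n) 1)
    (hφint : ∫ x, φ x = 1) :
    ∃ C : ℝ, 0 < C ∧
      ∀ (c : Euc n) (ℓ : ℝ), 1 ≤ ℓ →
      ∀ a : Euc n → ℂ, Measurable a → Function.support a ⊆ cube c ℓ →
        (∀ x, (‖a x‖₊ : ℝ≥0∞) ≤ volume (cube c ℓ) ^ (-(1 / lam))) →
        morrey n q lam (trMax n (fun x => (φ x : ℂ)) a) ≤ ENNReal.ofReal C := by
  have hlam : 0 < lam := lt_of_lt_of_le hq hqlam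
  set φc : Euc n → ℂ := fun x => (φ x : ℂ) with hφcdef
  refine ⟨((3:ℝ)^n) ^ (1/lam), Real.rpow_pos_of_pos (by positivity) _, ?_⟩
  intro c ℓ hℓ1 a ha hsupp hbound
  have hℓ0 : (0:ℝ) < ℓ := lt_of_lt_of_le one_pos hℓ1
  have hℓn : (0:ℝ) < ℓ ^ n := pow_pos hℓ0 n
  have hV : volume (cube c ℓ) = ENNReal.ofReal (ℓ ^ n) := volume_cube c hℓ0.le
  set Mr : ℝ := (ℓ ^ n) ^ (-(1/lam)) with hMrdef
  have hMr0 : 0 < Mr := Real.rpow_pos_of_pos hℓn _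
  have hM : volume (cube c ℓ) ^ (-(1/lam)) = ENNReal.ofReal Mr := by
    rw [hV, ENNReal.ofReal_rpow_of_pos hℓn]
  -- real bound on a
  have haMr : ∀ x, ‖a x‖ ≤ Mr := by
    intro x
    have h := hbound x
    rw [hM, ← enorm_eq_nnnorm, ← ofReal_norm] at h
    exact (ENNReal.ofReal_le_ofReal_iff hMr0.le).mp h
  -- enlarged cube
  set E : Set (Euc n) := cube (WithLp.toLp 2 (fun i => c i - 1) : Euc n) (ℓ + 2) with hEdef
  have hEmeas : MeasurableSet E := measurableSet_cube _ _
  have hEvol : volume E = ENNReal.ofReal ((ℓ + 2) ^ n) := volume_cube _ (by linarith)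
  -- pointwise bound on convolutions
  have hconv : ∀ t : ℝ, 0 < t → ∀ x, ‖conv n φc a t x‖ ≤ Mr := by
    intro t ht x
    have htn : (0:ℝ) < t ^ n := pow_pos ht n
    have hg1 : Integrable (fun z : Euc n => φ (t⁻¹ • z)) :=
      (MeasureTheory.integrable_comp_smul_iff volume φ (inv_ne_zero ht.ne')).mpr
        (hφ.continuous.integrable_of_hasCompactSupport hφc)
    have hg2 : Integrable (fun y : Euc n => φ (t⁻¹ • (x - y))) := hg1.comp_sub_left x
    have hgint : (∫ y, φ (t⁻¹ • (x - y))) = t ^ n := by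
      rw [MeasureTheory.integral_sub_left_eq_self (fun z => φ (t⁻¹ • z)) volume x,
        MeasureTheory.Measure.integral_comp_inv_smul_of_nonneg volume φ ht.le, hφint]
      simp [finrank_euclideanSpace_fin]
    have hd : ∀ y, ‖dilat n φc t (x - y)‖ = (t ^ n)⁻¹ * φ (t⁻¹ • (x - y)) := by
      intro y
      simp only [dilat, hφcdef, norm_mul, Complex.norm_real, Real.norm_eq_abs,
        abs_of_nonneg (hφ0 _), abs_of_nonneg (inv_nonneg.mpr htn.le)]
    calc ‖conv n φc a t x‖ ≤ ∫ y, ‖dilat n φc t (x - y) * a y‖ :=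
          norm_integral_le_integral_norm _
      _ ≤ ∫ y, Mr * ((t ^ n)⁻¹ * φ (t⁻¹ • (x - y))) := by
          apply integral_mono_of_nonneg
          · filter_upwards with y using norm_nonneg _
          · exact (hg2.const_mul _).const_mul _
          · filter_upwards with y
            rw [norm_mul, hd y]
            have h1 : (0:ℝ) ≤ (t ^ n)⁻¹ * φ (t⁻¹ • (x - y)) :=
              mul_nonneg (inv_nonneg.mpr htn.le) (hφ0 _)
            have h2 := mul_le_mul_of_nonneg_left (haMr y) h1
            nlinarith [h2]
      _ = Mr := by
          rw [integral_const_mul, integral_const_mul, hgint]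
          field_simp
  -- vanishing outside E
  have hzero : ∀ t : ℝ, 0 < t → t ≤ 1 → ∀ x, x ∉ E → conv n φc a t x = 0 := by
    intro t ht ht1 x hx
    have hvan : ∀ y, dilat n φc t (x - y) * a y = 0 := by
      intro y
      by_cases hay : a y = 0
      · simp [hay]
      · have hyQ : y ∈ cube c ℓ := hsupp hay
        have hφz : φ (t⁻¹ • (x - y)) = 0 := by
          by_contra hne
          have hmem : t⁻¹ • (x - y) ∈ Metric.ball (0 : Euc n) 1 :=
            hφs (subset_tsupport φ hne)
          rw [Metric.mem_ball, dist_zero_right, norm_smul, Real.norm_eq_abs, abs_inv,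
            abs_of_pos ht] at hmem
          have hxy : ‖x - y‖ < t := by
            have : ‖x - y‖ = t * (t⁻¹ * ‖x - y‖) := by field_simp
            rw [this]
            calc t * (t⁻¹ * ‖x - y‖) < t * 1 := by
                  exact mul_lt_mul_of_pos_left hmem ht
              _ = t := mul_one t
          apply hx
          intro i
          have hcoord : |x i - y i| ≤ ‖x - y‖ := abs_coord_le_norm (x - y) i
          have hlt : |x i - y i| < 1 := lt_of_le_of_lt hcoord (lt_of_lt_of_le hxy ht1)
          obtain ⟨hl, hr⟩ := abs_lt.mp hlt
          have h1 := (hyQ i).1; have h2 := (hyQ i).2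
          constructor
          · show c i - 1 ≤ x i
            linarith
          · show x i ≤ c i - 1 + (ℓ + 2)
            linarith
        simp only [dilat, hφcdef, hφz, Complex.ofReal_zero, mul_zero, zero_mul]
    simp only [conv, hvan, integral_zero]
  -- bound on the truncated maximal function
  have hu : ∀ x, trMax n φc a x ≤ E.indicator (fun _ => ENNReal.ofReal Mr) x := by
    intro x
    by_cases hx : x ∈ E
    · rw [Set.indicator_of_mem hx]
      simp only [trMax]
      refine iSup₂_le fun t ht => ?_
      rw [← enorm_eq_nnnorm, ← ofReal_norm]
      exact ENNReal.ofReal_le_ofReal (hconv t ht.1 x)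
    · rw [Set.indicator_of_notMem hx]
      simp only [trMax]
      refine iSup₂_le fun t ht => ?_
      rw [hzero t ht.1 ht.2 x hx]
      simp
  -- Morrey norm estimate
  rw [morrey]
  refine iSup_le fun c' => iSup_le fun ℓ' => iSup_le fun hℓ' => ?_
  set M : ℝ≥0∞ := ENNReal.ofReal Mr with hMdef
  have hM0' : M ≠ 0 := by
    rw [hMdef]; exact (ENNReal.ofReal_pos.mpr hMr0).ne'
  have hMtop : M ≠ ⊤ := ENNReal.ofReal_ne_top
  have hRvol : volume (cube c' ℓ') = ENNReal.ofReal (ℓ' ^ n) := volume_cube c' hℓ'.le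
  have hR0 : volume (cube c' ℓ') ≠ 0 := by
    rw [hRvol]; exact (ENNReal.ofReal_pos.mpr (pow_pos hℓ' n)).ne'
  have hRtop : volume (cube c' ℓ') ≠ ⊤ := by rw [hRvol]; exact ENNReal.ofReal_ne_top
  have hW0 : volume E ≠ 0 := by
    rw [hEvol]; exact (ENNReal.ofReal_pos.mpr (by positivity)).ne'
  have hWtop : volume E ≠ ⊤ := by rw [hEvol]; exact ENNReal.ofReal_ne_top
  have hint : (∫⁻ y in cube c' ℓ', (trMax n φc a y) ^ q) ≤
      M ^ q * volume (E ∩ cube c' ℓ') := by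
    calc (∫⁻ y in cube c' ℓ', (trMax n φc a y) ^ q)
        ≤ ∫⁻ y in cube c' ℓ', (E.indicator (fun _ => M) y) ^ q :=
          lintegral_mono fun y => ENNReal.rpow_le_rpow (hu y) hq.le
      _ = ∫⁻ y in cube c' ℓ', E.indicator (fun _ => M ^ q) y := by
          apply lintegral_congr; intro y
          by_cases hy : y ∈ E
          · rw [Set.indicator_of_mem hy, Set.indicator_of_mem hy]
          · rw [Set.indicator_of_notMem hy, Set.indicator_of_notMem hy,
              ENNReal.zero_rpow_of_pos hq]
      _ = M ^ q * volume (E ∩ cube c' ℓ') := by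
          rw [lintegral_indicator hEmeas, setLIntegral_const,
            Measure.restrict_apply hEmeas]
  have hq' : (0:ℝ) ≤ 1/q := by positivity
  have hqlam' : (0:ℝ) ≤ 1/q - 1/lam := by
    have := one_div_le_one_div_of_le hq hqlam
    linarith
  set m : ℝ≥0∞ := min (volume E) (volume (cube c' ℓ')) with hmdef
  have hm0 : m ≠ 0 := by
    rw [hmdef]
    intro h
    rcases min_eq_iff.mp h with h' | h'
    · exact hW0 h'.1
    · exact hR0 h'.1
  have hmtop : m ≠ ⊤ := ne_top_of_le_ne_top hRtop (min_le_right _ _)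
  have key : volume (cube c' ℓ') ^ (1 / lam - 1 / q) *
      (M ^ q * volume (E ∩ cube c' ℓ')) ^ (1 / q) ≤ M * volume E ^ (1/lam) := by
    have hEm : volume (E ∩ cube c' ℓ') ≤ m :=
      le_min (measure_mono Set.inter_subset_left) (measure_mono Set.inter_subset_right)
    calc volume (cube c' ℓ') ^ (1 / lam - 1 / q) *
          (M ^ q * volume (E ∩ cube c' ℓ')) ^ (1 / q)
        ≤ volume (cube c' ℓ') ^ (1 / lam - 1 / q) * (M ^ q * m) ^ (1 / q) := by
          gcongr
      _ = volume (cube c' ℓ') ^ (1 / lam - 1 / q) * (M * m ^ (1 / q)) := by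
          rw [ENNReal.mul_rpow_of_nonneg _ _ hq', ← ENNReal.rpow_mul,
            mul_one_div, div_self hq.ne', ENNReal.rpow_one]
      _ = volume (cube c' ℓ') ^ (1 / lam - 1 / q) *
            (M * (m ^ (1/q - 1/lam) * m ^ (1/lam))) := by
          rw [← ENNReal.rpow_add _ _ hm0 hmtop, sub_add_cancel]
      _ ≤ volume (cube c' ℓ') ^ (1 / lam - 1 / q) *
            (M * (volume (cube c' ℓ') ^ (1/q - 1/lam) * volume E ^ (1/lam))) := by
          gcongr
          · exact min_le_right _ _
          · exact min_le_left _ _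
      _ = (volume (cube c' ℓ') ^ (1 / lam - 1 / q) *
            volume (cube c' ℓ') ^ (1/q - 1/lam)) * (M * volume E ^ (1/lam)) := by
          ring
      _ = M * volume E ^ (1/lam) := by
          rw [← ENNReal.rpow_add _ _ hR0 hRtop]
          norm_num
  have final : M * volume E ^ (1/lam) ≤ ENNReal.ofReal (((3:ℝ)^n) ^ (1/lam)) := by
    rw [hEvol, ENNReal.ofReal_rpow_of_pos (by positivity), hMdef,
      ← ENNReal.ofReal_mul hMr0.le]
    apply ENNReal.ofReal_le_ofReal
    have h32 : (ℓ + 2) ^ n ≤ (3 * ℓ) ^ n := by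
      apply pow_le_pow_left₀ (by linarith) (by linarith)
    have h1 : ((ℓ + 2) ^ n : ℝ) ^ (1/lam) ≤ ((3*ℓ) ^ n : ℝ) ^ (1/lam) :=
      Real.rpow_le_rpow (by positivity) h32 (by positivity)
    have h2 : ((3*ℓ) ^ n : ℝ) ^ (1/lam) = ((3:ℝ)^n) ^ (1/lam) * (ℓ^n) ^ (1/lam) := by
      rw [mul_pow, Real.mul_rpow (by positivity) (by positivity)]
    have h3 : Mr * ((ℓ^n) ^ (1/lam)) = 1 := by
      rw [hMrdef, ← Real.rpow_add hℓn]
      norm_num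
    calc Mr * ((ℓ + 2) ^ n : ℝ) ^ (1/lam) ≤ Mr * ((3*ℓ) ^ n : ℝ) ^ (1/lam) := by
          exact mul_le_mul_of_nonneg_left h1 hMr0.le
      _ = ((3:ℝ)^n) ^ (1/lam) * (Mr * (ℓ^n) ^ (1/lam)) := by rw [h2]; ring
      _ = ((3:ℝ)^n) ^ (1/lam) := by rw [h3, mul_one]
  calc volume (cube c' ℓ') ^ (1 / lam - 1 / q) *
        (∫⁻ y in cube c' ℓ', (trMax n φc a y) ^ q) ^ (1 / q)
      ≤ volume (cube c' ℓ') ^ (1 / lam - 1 / q) *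
        (M ^ q * volume (E ∩ cube c' ℓ')) ^ (1 / q) := by gcongr ?_ * ?_ <;> first | rfl | exact ENNReal.rpow_le_rpow hint hq'
    _ ≤ M * volume E ^ (1/lam) := key
    _ ≤ ENNReal.ofReal (((3:ℝ)^n) ^ (1/lam)) := final

end
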